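/- Let G = (V,E) be a finite simple graph on V = {1,…,n} with n ≥ 1 and let k ∈ ℕ with k ≤ n. Then z^E_k(G) ≤ z^C_k(G), where z^E_k(G) = z^E_{J_k}(G) and z^C_k(G) = z^C_{J_k}(G) for J_k = { I ⊆ V : |I| = k }. -/

import Mathlib

open Matrix

noncomputable section

/-- A stable set vector of a graph `G`: a 0/1 vector with `s i * s j = 0` on edges. -/
def IsStableVec {V : Type*} (G : SimpleGraph V) (s : V → ℝ) : Prop :=
  (∀ i, s i = 0 ∨ s i = 1) ∧ ∀ i j, G.Adj i j → s i * s j = 0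

/-- The squared stable set polytope `STAB²(G) = conv{ s sᵀ : s ∈ S(G) }`. -/
def stab2 {V : Type*} (G : SimpleGraph V) : Set (Matrix V V ℝ) :=
  convexHull ℝ { M | ∃ s, IsStableVec G s ∧ M = Matrix.vecMulVec s s }

/-- The scaled squared stable set polytope
`SSTAB²(G) = conv({ (1/(sᵀs)) s sᵀ : s ∈ S(G), s ≠ 0 } ∪ {0})`. -/
def sstab2 {V : Type*} [Fintype V] (G : SimpleGraph V) : Set (Matrix V V ℝ) :=
  convexHull ℝ
    ({ M | ∃ s, IsStableVec G s ∧ s ≠ 0 ∧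
        M = (∑ k, s k * s k)⁻¹ • Matrix.vecMulVec s s } ∪ {(0 : Matrix V V ℝ)})

/-- The feasible region `TH²(G)` of the SDP (Tn+1): pairs `(x, X)` with `X` symmetric,
`diag X = x`, `X i j = 0` on edges and `X - x xᵀ` positive semidefinite. -/
def th2 {n : ℕ} (G : SimpleGraph (Fin n)) :
    Set ((Fin n → ℝ) × Matrix (Fin n) (Fin n) ℝ) :=
  { p | p.2.IsSymm ∧ (∀ i, p.2 i i = p.1 i) ∧
      (∀ i j, G.Adj i j → p.2 i j = 0) ∧ (p.2 - Matrix.vecMulVec p.1 p.1).PosSemidef }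

/-- The feasible region `CTH²(G)` of the SDP (Tn): symmetric PSD matrices with trace 1
vanishing on edges. -/
def cth2 {n : ℕ} (G : SimpleGraph (Fin n)) : Set (Matrix (Fin n) (Fin n) ℝ) :=
  { X | X.IsSymm ∧ X.trace = 1 ∧ (∀ i j, G.Adj i j → X i j = 0) ∧ X.PosSemidef }

/-- The principal submatrix `X_I` of `X` indexed by `I`. -/
def subMat {n : ℕ} (X : Matrix (Fin n) (Fin n) ℝ) (I : Finset (Fin n)) :
    Matrix (I : Set (Fin n)) (I : Set (Fin n)) ℝ :=
  X.submatrix Subtype.val Subtype.val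

/-- The exact subgraph constraint (ESC) for the subgraph of `G` induced by `I`. -/
def escFeas {n : ℕ} (G : SimpleGraph (Fin n)) (X : Matrix (Fin n) (Fin n) ℝ)
    (I : Finset (Fin n)) : Prop :=
  subMat X I ∈ stab2 (G.induce (I : Set (Fin n)))

/-- The scaled exact subgraph constraint (SESC) for the subgraph of `G` induced by `I`. -/
def sescFeas {n : ℕ} (G : SimpleGraph (Fin n)) (X : Matrix (Fin n) (Fin n) ℝ)
    (I : Finset (Fin n)) : Prop :=
  subMat X I ∈ sstab2 (G.induce (I : Set (Fin n)))

/-- `z^E_J(G)`: optimal value of (Tn+1) with the ESCs for all `I ∈ J`. -/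
def zE {n : ℕ} (G : SimpleGraph (Fin n)) (J : Set (Finset (Fin n))) : ℝ :=
  sSup { r | ∃ x X, (x, X) ∈ th2 G ∧ (∀ I ∈ J, escFeas G X I) ∧ r = ∑ i, x i }

/-- `z^C_J(G)`: optimal value of (Tn) with the ESCs for all `I ∈ J`. -/
def zC {n : ℕ} (G : SimpleGraph (Fin n)) (J : Set (Finset (Fin n))) : ℝ :=
  sSup { r | ∃ X, X ∈ cth2 G ∧ (∀ I ∈ J, escFeas G X I) ∧ r = ∑ i, ∑ j, X i j }

/-- `z^S_J(G)`: optimal value of (Tn) with the SESCs for all `I ∈ J`. -/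
def zS {n : ℕ} (G : SimpleGraph (Fin n)) (J : Set (Finset (Fin n))) : ℝ :=
  sSup { r | ∃ X, X ∈ cth2 G ∧ (∀ I ∈ J, sescFeas G X I) ∧ r = ∑ i, ∑ j, X i j }

/-- The collection `J_k` of all vertex subsets of cardinality `k`. -/
def Jk (n k : ℕ) : Set (Finset (Fin n)) := { I | I.card = k }

/-!
Scaling a feasible point `(x, X)` of `TH²(G)` by `1 / 1ᵀx` gives a point of `CTH²(G)`:
the trace becomes `1`, and `X - x xᵀ ⪰ 0` tested against the all-ones vector gives
`(1ᵀx)² ≤ ⟨J, X⟩`, so the objective becomes at least `1ᵀx`. When `1ᵀx > 1` the scaling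
factor lies in `[0, 1]`, and since `STAB²` is convex and contains `0` the exact subgraph
constraints survive. When `1ᵀx ≤ 1`, the feasible point `e_i e_iᵀ` already gives `z^C ≥ 1`.
-/

namespace Matrix.PosSemidef

variable {ι : Type*} {X : Matrix ι ι ℝ}

lemma isSymm (hX : X.PosSemidef) : X.IsSymm :=
  isHermitian_iff_isSymm.mp hX.isHermitian

variable [Fintype ι]

lemma sum_entries_nonneg (hX : X.PosSemidef) : 0 ≤ ∑ i, ∑ j, X i j := by
  simpa [dotProduct, mulVec, Finset.mul_sum] using hX.dotProduct_mulVec_nonneg (fun _ => 1)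

lemma apply_add_apply_le_diag [DecidableEq ι] (hX : X.PosSemidef) (i j : ι) :
    X i j + X j i ≤ X i i + X j j := by
  by_cases hij : i = j
  · subst hij; rfl
  · have h := hX.dotProduct_mulVec_nonneg (Pi.single i 1 - Pi.single j 1)
    simp only [star_trivial, dotProduct, mulVec, Pi.sub_apply, Pi.single_apply,
      mul_sub, sub_mul, mul_ite, ite_mul, mul_one, one_mul, mul_zero, zero_mul,
      Finset.sum_sub_distrib, Finset.sum_ite_eq', Finset.mem_univ,
      if_true] at h
    linarith

lemma sum_entries_le_card_mul_trace (hX : X.PosSemidef) :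
    ∑ i, ∑ j, X i j ≤ Fintype.card ι * X.trace := by
  classical
  have hsum : ∑ i, ∑ j, (X i j + X j i) ≤ ∑ i : ι, ∑ j : ι, (X i i + X j j) :=
    Finset.sum_le_sum fun i _ => Finset.sum_le_sum fun j _ => hX.apply_add_apply_le_diag i j
  simp only [Finset.sum_add_distrib, Finset.sum_const, Finset.card_univ, nsmul_eq_mul] at hsum
  rw [Finset.sum_comm (f := fun i j => X j i), ← Finset.mul_sum] at hsum
  simp only [trace, diag]
  linarith

end Matrix.PosSemidef

section StableSets

variable {V : Type*} {G : SimpleGraph V}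

lemma IsStableVec.induce {s : V → ℝ} (hs : IsStableVec G s) (S : Set V) :
    IsStableVec (G.induce S) (fun a => s a) :=
  ⟨fun a => hs.1 a, fun _ _ hab => hs.2 _ _ hab⟩

lemma isStableVec_single [DecidableEq V] (v : V) : IsStableVec G (Pi.single v 1) := by
  refine ⟨fun i => ?_, fun i j hij => ?_⟩
  · by_cases h : i = v <;> simp [h]
  · by_cases h : i = v
    · simp [Pi.single_apply, h ▸ hij.ne]
    · simp [h]

lemma zero_mem_stab2 (G : SimpleGraph V) : (0 : Matrix V V ℝ) ∈ stab2 G :=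
  subset_convexHull ℝ _
    ⟨0, ⟨fun _ => Or.inl rfl, fun _ _ _ => mul_zero 0⟩, by ext; simp [vecMulVec_apply]⟩

lemma smul_mem_stab2 {M : Matrix V V ℝ} (hM : M ∈ stab2 G) {c : ℝ} (hc : c ∈ Set.Icc 0 1) :
    c • M ∈ stab2 G :=
  (convex_convexHull ℝ _).smul_mem_of_zero_mem (zero_mem_stab2 G) hM hc

end StableSets

section Relaxations

variable {n : ℕ} {G : SimpleGraph (Fin n)} {J : Set (Finset (Fin n))}

lemma escFeas_vecMulVec {s : Fin n → ℝ} (hs : IsStableVec G s) (I : Finset (Fin n)) :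
    escFeas G (vecMulVec s s) I :=
  subset_convexHull ℝ _ ⟨_, hs.induce _, rfl⟩

lemma escFeas.smul {X : Matrix (Fin n) (Fin n) ℝ} {I : Finset (Fin n)} (h : escFeas G X I)
    {c : ℝ} (hc : c ∈ Set.Icc 0 1) : escFeas G (c • X) I :=
  smul_mem_stab2 h hc

lemma mem_cth2_of_posSemidef {X : Matrix (Fin n) (Fin n) ℝ} (hX : X.PosSemidef)
    (htr : X.trace = 1) (hedge : ∀ i j, G.Adj i j → X i j = 0) : X ∈ cth2 G :=
  ⟨hX.isSymm, htr, hedge, hX⟩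

variable (G J)

lemma zC_nonneg : 0 ≤ zC G J :=
  Real.sSup_nonneg fun _ ⟨_, ⟨_, _, _, hX⟩, _, hr⟩ => hr ▸ hX.sum_entries_nonneg

lemma zC_bddAbove :
    BddAbove { r | ∃ X, X ∈ cth2 G ∧ (∀ I ∈ J, escFeas G X I) ∧ r = ∑ i, ∑ j, X i j } := by
  refine ⟨n, ?_⟩
  rintro _ ⟨X, ⟨-, htr, -, hX⟩, -, rfl⟩
  simpa [htr] using hX.sum_entries_le_card_mul_trace

lemma one_le_zC (v : Fin n) : 1 ≤ zC G J := by
  set s : Fin n → ℝ := Pi.single v 1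
  have hs : IsStableVec G s := isStableVec_single v
  have hsum : ∑ i, s i = 1 := by simp [s]
  have hmem : vecMulVec s s ∈ cth2 G := by
    refine mem_cth2_of_posSemidef ?_ ?_ fun i j hij => hs.2 i j hij
    · simpa using posSemidef_vecMulVec_self_star s
    · simp [trace_vecMulVec, s]
  refine le_csSup (zC_bddAbove G J) ⟨_, hmem, fun I _ => escFeas_vecMulVec hs I, ?_⟩
  simp [vecMulVec_apply, ← Finset.mul_sum, hsum]

lemma sum_le_zC {x : Fin n → ℝ} {X : Matrix (Fin n) (Fin n) ℝ} (hxX : (x, X) ∈ th2 G)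
    (hesc : ∀ I ∈ J, escFeas G X I) : ∑ i, x i ≤ zC G J := by
  obtain ⟨-, hdiag, hedge, hpsd⟩ := hxX
  dsimp only at hdiag hedge hpsd
  set t := ∑ i, x i
  rcases le_or_gt t 1 with ht | ht
  · rcases isEmpty_or_nonempty (Fin n) with hn | ⟨⟨v⟩⟩
    · simpa [t] using zC_nonneg G J
    · exact ht.trans (one_le_zC G J v)
  have htpos : 0 < t := one_pos.trans ht
  have hX : X.PosSemidef := by
    simpa using hpsd.add (posSemidef_vecMulVec_self_star x)
  have hsq : t * t ≤ ∑ i, ∑ j, X i j := by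
    have h := hpsd.sum_entries_nonneg
    simp only [Matrix.sub_apply, vecMulVec_apply, Finset.sum_sub_distrib, ← Finset.sum_mul_sum] at h
    linarith
  have hmem : t⁻¹ • X ∈ cth2 G := by
    refine mem_cth2_of_posSemidef (hX.smul (inv_nonneg.mpr htpos.le)) ?_ fun i j hij => ?_
    · have htr : X.trace = t := Finset.sum_congr rfl fun i _ => hdiag i
      rw [trace_smul, htr, smul_eq_mul, inv_mul_cancel₀ htpos.ne']
    · simp [hedge i j hij]
  have hscale : t⁻¹ ∈ Set.Icc (0 : ℝ) 1 := ⟨inv_nonneg.mpr htpos.le, inv_le_one_of_one_le₀ ht.le⟩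
  calc t = t⁻¹ * (t * t) := by field_simp
    _ ≤ t⁻¹ * ∑ i, ∑ j, X i j := by gcongr
    _ = ∑ i, ∑ j, (t⁻¹ • X) i j := by simp [Finset.mul_sum]
    _ ≤ zC G J :=
      le_csSup (zC_bddAbove G J) ⟨_, hmem, fun I hI => (hesc I hI).smul hscale, rfl⟩

lemma zE_le_zC : zE G J ≤ zC G J :=
  Real.sSup_le (fun _ ⟨_, _, hxX, hesc, hr⟩ => hr ▸ sum_le_zC G J hxX hesc) (zC_nonneg G J)

end Relaxations

theorem stmt8_general {n : ℕ} (G : SimpleGraph (Fin n)) (k : ℕ) :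
    zE G (Jk n k) ≤ zC G (Jk n k) :=
  zE_le_zC G (Jk n k)

/-- `z^E_k(G) ≤ z^C_k(G)` for every level `k ≤ n`. -/
theorem stmt8 {n : ℕ} (hn : 1 ≤ n) (G : SimpleGraph (Fin n)) (k : ℕ) (hk : k ≤ n) :
    zE G (Jk n k) ≤ zC G (Jk n k) :=
  stmt8_general G k
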